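/- arXiv:1912.08570 — 2 statements merged into one kernel-verified Lean document; each statement's English description precedes it below -/
import Mathlib

section
/- Let m be a nonzero integer, S an open subset of {(ρ,z) ∈ ℝ² : ρ > 0}, and u = (u_ρ, u_z, u_θ) : S → ℝ³ continuously differentiable on S with div^m u = 0 at every point of S. Then curl^m(w) = u on S, where w = ((ρ/m) u_z, −(ρ/m) u_ρ, 0). (Exactness at the third stage of the mode-m cylindrical sequence: every div^m-free vector field is a mode-m curl.) -/
/-- Partial derivative in the first (ρ) direction. -/
noncomputable def pdRho (f : ℝ × ℝ → ℝ) (p : ℝ × ℝ) : ℝ := fderiv ℝ f p (1, 0)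

/-- Partial derivative in the second (z) direction. -/
noncomputable def pdZ (f : ℝ × ℝ → ℝ) (p : ℝ × ℝ) : ℝ := fderiv ℝ f p (0, 1)

/-!
The first two components of `curl^m w` reduce to `u_ρ` and `u_z` by cancelling `m/ρ` against
`ρ/m`. For the third, the factor `ρ/m` of `w_ρ` does not depend on `z`, so
`∂_z w_ρ - ∂_ρ w_z = (ρ ∂_z u_z + ∂_ρ(ρ u_ρ)) / m`, and `div^m u = 0` says that the numerator
is `m u_θ`.
-/

theorem pdRho_const_mul (c : ℝ) (f : ℝ × ℝ → ℝ) (p : ℝ × ℝ) :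
    pdRho (fun x => c * f x) p = c * pdRho f p := by
  show fderiv ℝ (c • f) p (1, 0) = c * fderiv ℝ f p (1, 0)
  rw [fderiv_const_smul_field]
  rfl

theorem pdZ_mul {f g : ℝ × ℝ → ℝ} {p : ℝ × ℝ} (hf : DifferentiableAt ℝ f p)
    (hg : DifferentiableAt ℝ g p) :
    pdZ (fun x => f x * g x) p = f p * pdZ g p + pdZ f p * g p := by
  simp [pdZ, fderiv_fun_mul hf hg, mul_comm]

theorem pdZ_fst_div_const (c : ℝ) (p : ℝ × ℝ) : pdZ (fun x => x.1 / c) p = 0 := by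
  simp only [pdZ, div_eq_mul_inv]
  rw [(hasFDerivAt_fst.mul_const c⁻¹).fderiv]
  simp

theorem pdZ_fst_div_const_mul (c : ℝ) {f : ℝ × ℝ → ℝ} {p : ℝ × ℝ}
    (hf : DifferentiableAt ℝ f p) : pdZ (fun x => x.1 / c * f x) p = p.1 / c * pdZ f p := by
  rw [pdZ_mul (by fun_prop) hf, pdZ_fst_div_const, zero_mul, add_zero]

theorem divm_free_is_curlm_general (m : ℤ) (hm : m ≠ 0) (S : Set (ℝ × ℝ)) (hS : IsOpen S)
    (hSpos : ∀ p ∈ S, 0 < p.1) (u1 u2 u3 : ℝ × ℝ → ℝ)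
    (hu2 : ContDiffOn ℝ 1 u2 S)
    (hdiv : ∀ q ∈ S,
      (1 / q.1) * pdRho (fun p => p.1 * u1 p) q - ((m : ℝ) / q.1) * u3 q + pdZ u2 q = 0) :
    ∀ q ∈ S,
      (-(((m : ℝ) / q.1) * (-(q.1 / (m : ℝ)) * u1 q)) - pdZ (fun _ => (0 : ℝ)) q,
        (1 / q.1) * (pdRho (fun p => p.1 * (0 : ℝ)) q + (m : ℝ) * (q.1 / (m : ℝ) * u2 q)),
        pdZ (fun p => p.1 / (m : ℝ) * u2 p) q - pdRho (fun p => -(p.1 / (m : ℝ)) * u1 p) q)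
      = (u1 q, u2 q, u3 q) := by
  intro q hq
  have hmR : (m : ℝ) ≠ 0 := Int.cast_ne_zero.mpr hm
  have hρ : q.1 ≠ 0 := (hSpos q hq).ne'
  have hu2q : DifferentiableAt ℝ u2 q :=
    (hu2.differentiableOn one_ne_zero).differentiableAt (hS.mem_nhds hq)
  have hw_z : (fun p : ℝ × ℝ => -(p.1 / (m : ℝ)) * u1 p) =
      fun p => -(1 / (m : ℝ)) * (p.1 * u1 p) := by
    funext p; ring
  have hρu1 : pdRho (fun p => p.1 * u1 p) q = (m : ℝ) * u3 q - q.1 * pdZ u2 q := by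
    have h := hdiv q hq
    field_simp at h
    linarith
  have hw_const : pdZ (fun _ => (0 : ℝ)) q = 0 ∧ pdRho (fun p => p.1 * (0 : ℝ)) q = 0 := by
    simp [pdZ, pdRho]
  rw [pdZ_fst_div_const_mul _ hu2q, hw_z, pdRho_const_mul, hρu1, hw_const.1, hw_const.2]
  refine Prod.ext ?_ (Prod.ext ?_ ?_) <;> dsimp only <;> field_simp <;> ring

/-- Exactness at the third stage: every `div^m`-free vector field is a mode-m curl,
namely `u = curl^m((ρ/m) u_z, −(ρ/m) u_ρ, 0)`. -/
theorem divm_free_is_curlm (m : ℤ) (hm : m ≠ 0) (S : Set (ℝ × ℝ)) (hS : IsOpen S)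
    (hSpos : ∀ p ∈ S, 0 < p.1) (u1 u2 u3 : ℝ × ℝ → ℝ)
    (hu1 : ContDiffOn ℝ 1 u1 S) (hu2 : ContDiffOn ℝ 1 u2 S) (hu3 : ContDiffOn ℝ 1 u3 S)
    (hdiv : ∀ q ∈ S,
      (1 / q.1) * pdRho (fun p => p.1 * u1 p) q - ((m : ℝ) / q.1) * u3 q + pdZ u2 q = 0) :
    ∀ q ∈ S,
      (-(((m : ℝ) / q.1) * (-(q.1 / (m : ℝ)) * u1 q)) - pdZ (fun _ => (0 : ℝ)) q,
        (1 / q.1) * (pdRho (fun p => p.1 * (0 : ℝ)) q + (m : ℝ) * (q.1 / (m : ℝ) * u2 q)),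
        pdZ (fun p => p.1 / (m : ℝ) * u2 p) q - pdRho (fun p => -(p.1 / (m : ℝ)) * u1 p) q)
      = (u1 q, u2 q, u3 q) :=
  divm_free_is_curlm_general m hm S hS hSpos u1 u2 u3 hu2 hdiv
end

section
/- Let m be a nonzero integer with |m| ≥ 1, R > 0, S an open subset of (0,R) × ℝ, and ṽ = (ṽ₁, ṽ₂, ṽ₃) : S → ℝ³ continuously differentiable on S. Let u = η_{m,1}^{-1}(ṽ) = ((ρ ṽ₁ − ṽ₃)/m, (ρ/m) ṽ₂, ṽ₃). Then, as inequalities of (possibly infinite) Lebesgue integrals of nonnegative measurable functions, ∫_S |u|² ρ dρ dz ≤ 2R³ ∫_S ṽ₁² dρ dz + R³ ∫_S ṽ₂² dρ dz + 3R ∫_S ṽ₃² dρ dz, and ∫_S |curl^m u|² ρ dρ dz ≤ 6R ∫_S (ṽ₁² + ṽ₂²) dρ dz + 4R³ ∫_S (∂_ρ ṽ₂ − ∂_z ṽ₁)² dρ dz + 4R ∫_S ((∂_ρ ṽ₃)² + (∂_z ṽ₃)²) dρ dz, where |·| denotes the Euclidean norm on ℝ³. (Conformity bound for the mode-m edge space: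 if (ṽ₁,ṽ₂) ∈ H(curl_sc; S) and ṽ₃ ∈ H¹(S), then η_{m,1}^{-1}(ṽ) lies in the weighted space H_ρ(curl^m; S).) -/
/-!
Both `u = η_{m,1}⁻¹ ṽ` and `curl^m u` are free of negative powers of `ρ`: by the product rule,
`curl^m u = (-ṽ₂ - ∂_z ṽ₃, ṽ₁ + ∂_ρ ṽ₃, (-ρ curl_sc(ṽ₁, ṽ₂) - ∂_z ṽ₃ - ṽ₂) / m)`,
the two `1/ρ` factors cancelling. With `0 < ρ < R` and `m² ≥ 1`, the weighted integrands are
then bounded pointwise by elementary quadratic inequalities, and the bounds integrate term by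
term. Measurability comes from the continuity of `ṽ` and the measurability of `fderiv` of any
function.
-/

open MeasureTheory

section PartialDerivatives

variable {f g : ℝ × ℝ → ℝ} {p : ℝ × ℝ}

lemma pdRho_fst_mul (hf : DifferentiableAt ℝ f p) :
    pdRho (fun r => r.1 * f r) p = f p + p.1 * pdRho f p := by
  simp only [pdRho, fderiv_fun_mul differentiableAt_fst hf, fderiv_fst,
    add_apply, smul_apply, smul_eq_mul, ContinuousLinearMap.coe_fst', mul_one]
  ring

lemma pdZ_fst_mul (hf : DifferentiableAt ℝ f p) :
    pdZ (fun r => r.1 * f r) p = p.1 * pdZ f p := by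
  simp [pdZ, fderiv_fun_mul differentiableAt_fst hf, fderiv_fst]

lemma pdZ_sub (hf : DifferentiableAt ℝ f p) (hg : DifferentiableAt ℝ g p) :
    pdZ (fun r => f r - g r) p = pdZ f p - pdZ g p := by
  simp [pdZ, fderiv_fun_sub hf hg]

lemma pdRho_div_const (hf : DifferentiableAt ℝ f p) (c : ℝ) :
    pdRho (fun r => f r / c) p = pdRho f p / c := by
  simp [pdRho, div_eq_mul_inv, fderiv_mul_const hf, mul_comm]

lemma pdZ_div_const (hf : DifferentiableAt ℝ f p) (c : ℝ) :
    pdZ (fun r => f r / c) p = pdZ f p / c := by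
  simp [pdZ, div_eq_mul_inv, fderiv_mul_const hf, mul_comm]

end PartialDerivatives

lemma curl_edgeInv_eq {m : ℝ} (hm : m ≠ 0) {v1 v2 v3 : ℝ × ℝ → ℝ} {p : ℝ × ℝ}
    (hρ : p.1 ≠ 0) (hd1 : DifferentiableAt ℝ v1 p) (hd2 : DifferentiableAt ℝ v2 p)
    (hd3 : DifferentiableAt ℝ v3 p) :
    -((m / p.1) * (p.1 / m * v2 p)) - pdZ v3 p = -v2 p - pdZ v3 p ∧
    (1 / p.1) * (pdRho (fun r => r.1 * v3 r) p + m * ((p.1 * v1 p - v3 p) / m))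
      = v1 p + pdRho v3 p ∧
    pdZ (fun r => (r.1 * v1 r - v3 r) / m) p - pdRho (fun r => r.1 / m * v2 r) p
      = (-(p.1 * (pdRho v2 p - pdZ v1 p)) - pdZ v3 p - v2 p) / m := by
  have hfv1 : DifferentiableAt ℝ (fun r => r.1 * v1 r) p := differentiableAt_fst.mul hd1
  have hdiv : (fun r : ℝ × ℝ => r.1 / m * v2 r) = fun r => r.1 * v2 r / m := by
    funext r; ring
  refine ⟨by field_simp, ?_, ?_⟩
  · rw [pdRho_fst_mul hd3]
    field_simp
    ring
  · rw [pdZ_div_const (hfv1.fun_sub hd3), pdZ_sub hfv1 hd3, pdZ_fst_mul hd1, hdiv,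
      pdRho_div_const (differentiableAt_fst.fun_mul hd2), pdRho_fst_mul hd2]
    ring

lemma sq_div_le_sq {m : ℝ} (hm : 1 ≤ m ^ 2) (x : ℝ) : (x / m) ^ 2 ≤ x ^ 2 := by
  rw [div_pow]
  exact div_le_self (sq_nonneg x) hm

lemma edgeInv_sq_mul_le {m R ρ a b c : ℝ} (hm : 1 ≤ m ^ 2) (hρ : 0 < ρ) (hρR : ρ < R) :
    (((ρ * a - c) / m) ^ 2 + (ρ / m * b) ^ 2 + c ^ 2) * ρ
      ≤ 2 * R ^ 3 * a ^ 2 + R ^ 3 * b ^ 2 + 3 * R * c ^ 2 := by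
  have hρ3 : ρ ^ 3 ≤ R ^ 3 := pow_le_pow_left₀ hρ.le hρR.le 3
  have h1 := sq_div_le_sq hm (ρ * a - c)
  have h2 : (ρ / m * b) ^ 2 ≤ (ρ * b) ^ 2 := by
    simpa [div_mul_eq_mul_div] using sq_div_le_sq hm (ρ * b)
  have hsum : ((ρ * a - c) / m) ^ 2 + (ρ / m * b) ^ 2 + c ^ 2
      ≤ 2 * ρ ^ 2 * a ^ 2 + ρ ^ 2 * b ^ 2 + 3 * c ^ 2 := by
    nlinarith [sq_nonneg (ρ * a + c)]
  calc _ ≤ (2 * ρ ^ 2 * a ^ 2 + ρ ^ 2 * b ^ 2 + 3 * c ^ 2) * ρ :=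
        mul_le_mul_of_nonneg_right hsum hρ.le
    _ ≤ _ := by
      nlinarith [mul_le_mul_of_nonneg_right hρ3 (sq_nonneg a),
        mul_le_mul_of_nonneg_right hρ3 (sq_nonneg b),
        mul_le_mul_of_nonneg_right hρR.le (sq_nonneg c)]

lemma curl_edgeInv_sq_mul_le {m R ρ a b c r z : ℝ} (hm : 1 ≤ m ^ 2) (hρ : 0 < ρ)
    (hρR : ρ < R) :
    ((-b - z) ^ 2 + (a + r) ^ 2 + ((-(ρ * c) - z - b) / m) ^ 2) * ρ
      ≤ 6 * R * (a ^ 2 + b ^ 2) + 4 * R ^ 3 * c ^ 2 + 4 * R * (r ^ 2 + z ^ 2) := by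
  have hρ3 : ρ ^ 3 ≤ R ^ 3 := pow_le_pow_left₀ hρ.le hρR.le 3
  have h3 := sq_div_le_sq hm (-(ρ * c) - z - b)
  -- `(x + y + w)² ≤ 4x² + 2y² + 4w²` is Cauchy–Schwarz with weights `1/4, 1/2, 1/4`
  have hsum : (-b - z) ^ 2 + (a + r) ^ 2 + ((-(ρ * c) - z - b) / m) ^ 2
      ≤ 2 * a ^ 2 + 6 * b ^ 2 + 4 * ρ ^ 2 * c ^ 2 + 2 * r ^ 2 + 4 * z ^ 2 := by
    nlinarith [sq_nonneg (b - z), sq_nonneg (a - r), sq_nonneg (2 * (ρ * c) - z),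
      sq_nonneg (2 * b - z), sq_nonneg (ρ * c - b)]
  calc _ ≤ (2 * a ^ 2 + 6 * b ^ 2 + 4 * ρ ^ 2 * c ^ 2 + 2 * r ^ 2 + 4 * z ^ 2) * ρ :=
        mul_le_mul_of_nonneg_right hsum hρ.le
    _ ≤ _ := by
      nlinarith [mul_le_mul_of_nonneg_right hρ3 (sq_nonneg c),
        mul_le_mul_of_nonneg_right hρR.le (sq_nonneg a),
        mul_le_mul_of_nonneg_right hρR.le (sq_nonneg b),
        mul_le_mul_of_nonneg_right hρR.le (sq_nonneg r),
        mul_le_mul_of_nonneg_right hρR.le (sq_nonneg z)]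

lemma lintegral_ofReal_le_of_le_add_add {α : Type*} [MeasurableSpace α] {μ : Measure α}
    {F g₁ g₂ g₃ : α → ℝ} {c₁ c₂ c₃ : ℝ}
    (hg₁ : ∀ x, 0 ≤ g₁ x) (hg₂ : ∀ x, 0 ≤ g₂ x) (hg₃ : ∀ x, 0 ≤ g₃ x)
    (hm₁ : AEMeasurable g₁ μ) (hm₂ : AEMeasurable g₂ μ)
    (h : ∀ᵐ x ∂μ, F x ≤ c₁ * g₁ x + c₂ * g₂ x + c₃ * g₃ x) :
    ∫⁻ x, ENNReal.ofReal (F x) ∂μ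
      ≤ ENNReal.ofReal c₁ * (∫⁻ x, ENNReal.ofReal (g₁ x) ∂μ)
        + ENNReal.ofReal c₂ * (∫⁻ x, ENNReal.ofReal (g₂ x) ∂μ)
        + ENNReal.ofReal c₃ * ∫⁻ x, ENNReal.ofReal (g₃ x) ∂μ := by
  calc ∫⁻ x, ENNReal.ofReal (F x) ∂μ
      ≤ ∫⁻ x, (ENNReal.ofReal c₁ * ENNReal.ofReal (g₁ x)
          + ENNReal.ofReal c₂ * ENNReal.ofReal (g₂ x)
          + ENNReal.ofReal c₃ * ENNReal.ofReal (g₃ x)) ∂μ := by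
        refine lintegral_mono_ae (h.mono fun x hx => ?_)
        rw [← ENNReal.ofReal_mul' (hg₁ x), ← ENNReal.ofReal_mul' (hg₂ x),
          ← ENNReal.ofReal_mul' (hg₃ x)]
        exact (ENNReal.ofReal_le_ofReal hx).trans
          (ENNReal.ofReal_add_le.trans (add_le_add ENNReal.ofReal_add_le le_rfl))
    _ = _ := by
      rw [lintegral_add_left' (by fun_prop), lintegral_add_left' (by fun_prop),
        lintegral_const_mul' _ _ ENNReal.ofReal_ne_top,
        lintegral_const_mul' _ _ ENNReal.ofReal_ne_top,
        lintegral_const_mul' _ _ ENNReal.ofReal_ne_top]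

theorem conformity_edge_general (m : ℤ) (hm' : 1 ≤ |m|) (R : ℝ)
    (S : Set (ℝ × ℝ)) (hS : IsOpen S) (hSsub : ∀ p ∈ S, p.1 ∈ Set.Ioo 0 R)
    (v1 v2 v3 : ℝ × ℝ → ℝ)
    (hv1 : ContDiffOn ℝ 1 v1 S) (hv2 : ContDiffOn ℝ 1 v2 S) (hv3 : ContDiffOn ℝ 1 v3 S) :
    (∫⁻ p in S, ENNReal.ofReal
          ((((p.1 * v1 p - v3 p) / (m : ℝ)) ^ 2
            + (p.1 / (m : ℝ) * v2 p) ^ 2 + (v3 p) ^ 2) * p.1)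
        ≤ ENNReal.ofReal (2 * R ^ 3) * (∫⁻ p in S, ENNReal.ofReal ((v1 p) ^ 2))
          + ENNReal.ofReal (R ^ 3) * (∫⁻ p in S, ENNReal.ofReal ((v2 p) ^ 2))
          + ENNReal.ofReal (3 * R) * ∫⁻ p in S, ENNReal.ofReal ((v3 p) ^ 2))
    ∧ (∫⁻ p in S, ENNReal.ofReal
          (((-(((m : ℝ) / p.1) * (p.1 / (m : ℝ) * v2 p)) - pdZ v3 p) ^ 2
            + ((1 / p.1) * (pdRho (fun r => r.1 * v3 r) p
                + (m : ℝ) * ((p.1 * v1 p - v3 p) / (m : ℝ)))) ^ 2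
            + (pdZ (fun r => (r.1 * v1 r - v3 r) / (m : ℝ)) p
                - pdRho (fun r => r.1 / (m : ℝ) * v2 r) p) ^ 2) * p.1)
        ≤ ENNReal.ofReal (6 * R)
            * (∫⁻ p in S, ENNReal.ofReal ((v1 p) ^ 2 + (v2 p) ^ 2))
          + ENNReal.ofReal (4 * R ^ 3)
            * (∫⁻ p in S, ENNReal.ofReal ((pdRho v2 p - pdZ v1 p) ^ 2))
          + ENNReal.ofReal (4 * R)
            * ∫⁻ p in S, ENNReal.ofReal ((pdRho v3 p) ^ 2 + (pdZ v3 p) ^ 2)) := by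
  have hm2 : (1 : ℝ) ≤ (m : ℝ) ^ 2 := by
    rw [one_le_sq_iff_one_le_abs, ← Int.cast_abs]
    exact_mod_cast hm'
  have hm0 : (m : ℝ) ≠ 0 := by
    rintro h
    norm_num [h] at hm2
  have hSm : MeasurableSet S := hS.measurableSet
  have hv : ∀ {v : ℝ × ℝ → ℝ}, ContDiffOn ℝ 1 v S →
      AEMeasurable (fun p => v p ^ 2) (volume.restrict S) :=
    fun hv => (hv.continuousOn.aemeasurable hSm).pow_const 2
  have hd : ∀ {v : ℝ × ℝ → ℝ}, ContDiffOn ℝ 1 v S →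
      ∀ p ∈ S, DifferentiableAt ℝ v p :=
    fun hv p hp => (hv.differentiableOn one_ne_zero).differentiableAt (hS.mem_nhds hp)
  constructor
  · refine lintegral_ofReal_le_of_le_add_add (fun _ => sq_nonneg _) (fun _ => sq_nonneg _)
      (fun _ => sq_nonneg _) (hv hv1) (hv hv2) ?_
    filter_upwards [ae_restrict_mem hSm] with p hp
    exact edgeInv_sq_mul_le hm2 (hSsub p hp).1 (hSsub p hp).2
  · refine lintegral_ofReal_le_of_le_add_add (fun _ => by positivity) (fun _ => sq_nonneg _)
      (fun _ => by positivity) ((hv hv1).add (hv hv2))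
      (((measurable_fderiv_apply_const ℝ v2 _).sub
        (measurable_fderiv_apply_const ℝ v1 _)).pow_const 2).aemeasurable ?_
    filter_upwards [ae_restrict_mem hSm] with p hp
    obtain ⟨hρ, hρR⟩ := hSsub p hp
    obtain ⟨e₁, e₂, e₃⟩ :=
      curl_edgeInv_eq hm0 hρ.ne' (hd hv1 p hp) (hd hv2 p hp) (hd hv3 p hp)
    rw [e₁, e₂, e₃]
    exact curl_edgeInv_sq_mul_le hm2 hρ hρR

/-- Conformity bound for the mode-m edge space: weighted bounds for
`u = η_{m,1}^{-1}(ṽ)` and `curl^m u`. -/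
theorem conformity_edge (m : ℤ) (hm : m ≠ 0) (hm' : 1 ≤ |m|) (R : ℝ) (hR : 0 < R)
    (S : Set (ℝ × ℝ)) (hS : IsOpen S) (hSsub : ∀ p ∈ S, p.1 ∈ Set.Ioo 0 R)
    (v1 v2 v3 : ℝ × ℝ → ℝ)
    (hv1 : ContDiffOn ℝ 1 v1 S) (hv2 : ContDiffOn ℝ 1 v2 S) (hv3 : ContDiffOn ℝ 1 v3 S) :
    (∫⁻ p in S, ENNReal.ofReal
          ((((p.1 * v1 p - v3 p) / (m : ℝ)) ^ 2
            + (p.1 / (m : ℝ) * v2 p) ^ 2 + (v3 p) ^ 2) * p.1)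
        ≤ ENNReal.ofReal (2 * R ^ 3) * (∫⁻ p in S, ENNReal.ofReal ((v1 p) ^ 2))
          + ENNReal.ofReal (R ^ 3) * (∫⁻ p in S, ENNReal.ofReal ((v2 p) ^ 2))
          + ENNReal.ofReal (3 * R) * ∫⁻ p in S, ENNReal.ofReal ((v3 p) ^ 2))
    ∧ (∫⁻ p in S, ENNReal.ofReal
          (((-(((m : ℝ) / p.1) * (p.1 / (m : ℝ) * v2 p)) - pdZ v3 p) ^ 2
            + ((1 / p.1) * (pdRho (fun r => r.1 * v3 r) p
                + (m : ℝ) * ((p.1 * v1 p - v3 p) / (m : ℝ)))) ^ 2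
            + (pdZ (fun r => (r.1 * v1 r - v3 r) / (m : ℝ)) p
                - pdRho (fun r => r.1 / (m : ℝ) * v2 r) p) ^ 2) * p.1)
        ≤ ENNReal.ofReal (6 * R)
            * (∫⁻ p in S, ENNReal.ofReal ((v1 p) ^ 2 + (v2 p) ^ 2))
          + ENNReal.ofReal (4 * R ^ 3)
            * (∫⁻ p in S, ENNReal.ofReal ((pdRho v2 p - pdZ v1 p) ^ 2))
          + ENNReal.ofReal (4 * R)
            * ∫⁻ p in S, ENNReal.ofReal ((pdRho v3 p) ^ 2 + (pdZ v3 p) ^ 2)) :=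
  conformity_edge_general m hm' R S hS hSsub v1 v2 v3 hv1 hv2 hv3
end
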